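/- arXiv:math/0612386 — 2 statements merged into one kernel-verified Lean document; each statement's English description precedes it below -/
import Mathlib

section
/- The number of infinite cyclic factors in any subnormal series of a polycyclic group G with cyclic factors is independent of the chosen series (Hirsch's theorem); this number is called the Hirsch number h(G). -/
/-- The factor group of a subnormal step is cyclic (the group structure on the quotient
comes from normality). -/
def CyclicQuotient {G : Type*} [Group G] (N : Subgroup G) (h : N.Normal) : Prop := by
  letI := h
  exact IsCyclic (G ⧸ N)

/-- A subnormal series `⊥ = s 0 ◁ s 1 ◁ ... ◁ s k = ⊤` with cyclic factor groups. -/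
def IsCyclicFactorSeries {G : Type*} [Group G] {k : ℕ} (s : Fin (k + 1) → Subgroup G) : Prop :=
  s 0 = ⊥ ∧ s (Fin.last k) = ⊤ ∧
  (∀ i : Fin k, s i.castSucc ≤ s i.succ) ∧
  ∀ i : Fin k, ∃ h : ((s i.castSucc).subgroupOf (s i.succ)).Normal,
    CyclicQuotient ((s i.castSucc).subgroupOf (s i.succ)) h

/-- A group is polycyclic if it admits a subnormal series with cyclic factors. -/
def IsPolycyclic (G : Type*) [Group G] : Prop :=
  ∃ (k : ℕ) (s : Fin (k + 1) → Subgroup G), IsCyclicFactorSeries s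


/-- The number of infinite cyclic factors of a subnormal series (a cyclic group is
infinite cyclic iff it is infinite, so we count the infinite factors). -/
noncomputable def infFactorCount {G : Type*} [Group G] {k : ℕ}
    (s : Fin (k + 1) → Subgroup G) : ℕ :=
  Nat.card {i : Fin k // Infinite (↥(s i.succ) ⧸ (s i.castSucc).subgroupOf (s i.succ))}

open Subgroup Pointwise

section Aux

variable {G : Type*} [Group G]

/-- A `relindex`-based count of the infinite factors of a series. -/
noncomputable def relCount {k : ℕ} (s : Fin (k + 1) → Subgroup G) : ℕ :=
  ∑ i : Fin k, if (s i.castSucc).relIndex (s i.succ) = 0 then 1 else 0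

lemma relindex_ne_zero_of_finite {H K : Subgroup G} [Finite ↥K] : H.relIndex K ≠ 0 := by
  have h1 : Nonempty (↥K ⧸ H.subgroupOf K) := ⟨QuotientGroup.mk 1⟩
  have h2 : Finite (↥K ⧸ H.subgroupOf K) := Quotient.finite _
  rw [Subgroup.relIndex, Subgroup.index_eq_card]
  exact Nat.card_ne_zero.mpr ⟨h1, h2⟩

lemma infFactorCount_eq_relCount {k : ℕ} (s : Fin (k + 1) → Subgroup G) :
    infFactorCount s = relCount s := by
  classical
  have key : ∀ i : Fin k, Infinite (↥(s i.succ) ⧸ (s i.castSucc).subgroupOf (s i.succ)) ↔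
      (s i.castSucc).relIndex (s i.succ) = 0 := by
    intro i
    rw [Subgroup.relIndex, Subgroup.index_eq_card, Nat.card_eq_zero]
    constructor
    · exact fun h => Or.inr h
    · rintro (h | h)
      · exact absurd ⟨QuotientGroup.mk 1⟩ (not_nonempty_iff.mpr h)
      · exact h
  unfold infFactorCount relCount
  rw [Nat.card_eq_fintype_card, Fintype.card_subtype, Finset.card_filter]
  exact Finset.sum_congr rfl fun i _ => if_congr (key i) rfl rfl

/-- Kernel of a morphism into a cyclic group gives a cyclic quotient. -/
lemma exists_cyclicQuotient_ker {A B : Type*} [Group A] [Group B] [IsCyclic B] (φ : A →* B) :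
    ∃ h : (φ.ker).Normal, CyclicQuotient φ.ker h := by
  refine ⟨MonoidHom.normal_ker φ, ?_⟩
  show IsCyclic (A ⧸ φ.ker)
  exact isCyclic_of_surjective _ (QuotientGroup.quotientKerEquivRange φ).symm.surjective

/-- Image of a normal subgroup with cyclic quotient under a surjective morphism. -/
lemma exists_cyclicQuotient_map {A B : Type*} [Group A] [Group B] (χ : A →* B)
    (hχ : Function.Surjective χ) (H : Subgroup A) [hH : H.Normal]
    (hc : IsCyclic (A ⧸ H)) :
    ∃ h : (H.map χ).Normal, CyclicQuotient (H.map χ) h := by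
  have hnor : (H.map χ).Normal := hH.map χ hχ
  refine ⟨hnor, ?_⟩
  letI := hnor
  show IsCyclic (B ⧸ H.map χ)
  have hle : H ≤ (H.map χ).comap χ := fun a ha => Subgroup.mem_comap.mpr (Subgroup.mem_map_of_mem χ ha)
  have hsurj : Function.Surjective (QuotientGroup.map H (H.map χ) χ hle) := by
    intro q
    obtain ⟨b, rfl⟩ := QuotientGroup.mk_surjective q
    obtain ⟨a, rfl⟩ := hχ b
    exact ⟨QuotientGroup.mk a, rfl⟩
  exact isCyclic_of_surjective _ hsurj

/-- In a cyclic group, a nontrivial subgroup has finite index. -/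
lemma index_ne_zero_of_ne_bot {Q : Type*} [Group Q] [IsCyclic Q] {S : Subgroup Q}
    (hS : S ≠ ⊥) : S.index ≠ 0 := by
  obtain ⟨⟨x, hxS⟩, hx⟩ := Subgroup.ne_bot_iff_exists_ne_one.mp hS
  have hx1 : x ≠ 1 := by simpa [Subtype.ext_iff] using hx
  obtain ⟨g, hg⟩ := IsCyclic.exists_generator (α := Q)
  obtain ⟨m, rfl⟩ := hg x
  have hm : m ≠ 0 := by rintro rfl; simp at hx1
  have hle : Subgroup.zpowers (g ^ m) ≤ S := Subgroup.zpowers_le.mpr hxS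
  have hdvd := Subgroup.index_dvd_of_le hle
  have hfin : Finite (Q ⧸ Subgroup.zpowers (g ^ m)) := by
    set n : ℕ := m.natAbs with hn_def
    have hn : 0 < n := Int.natAbs_pos.mpr hm
    have hgn : g ^ (n : ℤ) ∈ Subgroup.zpowers (g ^ m) := by
      rcases Int.natAbs_eq m with h | h
      · rw [show ((n : ℤ)) = m by omega]
        exact Subgroup.mem_zpowers _
      · rw [show ((n : ℤ)) = -m by omega, zpow_neg]
        exact inv_mem (Subgroup.mem_zpowers _)
    apply Finite.of_surjective
      (fun j : Fin n => (QuotientGroup.mk (g ^ (j : ℕ)) : Q ⧸ Subgroup.zpowers (g ^ m)))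
    intro q
    obtain ⟨y, rfl⟩ := QuotientGroup.mk_surjective q
    obtain ⟨c, rfl⟩ := hg y
    have hc0 : (0 : ℤ) ≤ c % n := Int.emod_nonneg c (by exact_mod_cast hn.ne')
    have hclt : c % n < n := Int.emod_lt_of_pos c (by exact_mod_cast hn)
    refine ⟨⟨(c % n).toNat, by omega⟩, ?_⟩
    have h1 : (((c % n).toNat : ℤ)) = c % n := Int.toNat_of_nonneg hc0
    have h2 : g ^ c = g ^ (c % n) * (g ^ (n : ℤ)) ^ (c / n) := by
      rw [← zpow_mul, ← zpow_add, Int.emod_add_mul_ediv]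
    have h3 : g ^ (((c % n).toNat : ℕ)) = g ^ (c % n) := by
      rw [← zpow_natCast, h1]
    simp only [h3, h2]
    exact (QuotientGroup.mk_mul_of_mem _ (Subgroup.zpow_mem _ hgn _)).symm
  intro h0
  have : (Subgroup.zpowers (g ^ m)).index ≠ 0 := by
    rw [Subgroup.index_eq_card]
    exact Nat.card_ne_zero.mpr ⟨⟨QuotientGroup.mk 1⟩, hfin⟩
  rw [h0] at hdvd
  exact this (Nat.eq_zero_of_zero_dvd hdvd)

/-- In an infinite cyclic group, a nontrivial subgroup is infinite. -/
lemma infinite_subgroup_of_ne_bot {Q : Type*} [Group Q] [IsCyclic Q] [Infinite Q]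
    {S : Subgroup Q} (hS : S ≠ ⊥) : Infinite S := by
  obtain ⟨⟨x, hxS⟩, hx⟩ := Subgroup.ne_bot_iff_exists_ne_one.mp hS
  have hx1 : x ≠ 1 := by simpa [Subtype.ext_iff] using hx
  obtain ⟨g, hg⟩ := IsCyclic.exists_generator (α := Q)
  have hord : ¬ IsOfFinOrder x := by
    intro hfin
    obtain ⟨m, rfl⟩ := hg x
    have hm : m ≠ 0 := by rintro rfl; simp at hx1
    obtain ⟨c, hc, hc1⟩ := isOfFinOrder_iff_zpow_eq_one.mp hfin
    have hgfin : IsOfFinOrder g := by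
      refine isOfFinOrder_iff_zpow_eq_one.mpr ⟨m * c, mul_ne_zero hm hc, ?_⟩
      rw [zpow_mul]; exact hc1
    have : (Subgroup.zpowers g : Set Q).Finite := hgfin.finite_zpowers
    have huniv : (Subgroup.zpowers g : Set Q) = Set.univ :=
      Set.eq_univ_iff_forall.mpr fun y => hg y
    rw [huniv, Set.finite_univ_iff] at this
    exact absurd this (not_finite_iff_infinite.mpr inferInstance)
  have hinf : (Subgroup.zpowers x : Set Q).Infinite := infinite_zpowers.mpr hord
  have hsub : (Subgroup.zpowers x : Set Q) ⊆ (S : Set Q) := Subgroup.zpowers_le.mpr hxS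
  have : (S : Set Q).Infinite := hinf.mono hsub
  exact Set.infinite_coe_iff.mpr this

/-- The count of infinite factors of any cyclic-factor series of a cyclic group is 1 if the
group is infinite, 0 otherwise. -/
lemma relCount_of_isCyclic {Q : Type*} [Group Q] [IsCyclic Q] {l : ℕ}
    (v : Fin (l + 1) → Subgroup Q) (hv : IsCyclicFactorSeries v) :
    relCount v = if Nat.card Q = 0 then 1 else 0 := by
  obtain ⟨hv0, hvlast, hvmono, _⟩ := hv
  by_cases hQ : Nat.card Q = 0
  · -- infinite case
    haveI : Infinite Q := by
      rcases Nat.card_eq_zero.mp hQ with h | h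
      · exact absurd ⟨1⟩ (not_nonempty_iff.mpr h)
      · exact h
    rw [if_pos hQ]
    have hmono : Monotone v := Fin.monotone_iff_le_succ.mpr hvmono
    set P : Fin l → Prop := fun i => v i.castSucc = ⊥ ∧ v i.succ ≠ ⊥ with hP
    have hiff : ∀ i : Fin l, ((v i.castSucc).relIndex (v i.succ) = 0 ↔ P i) := by
      intro i
      constructor
      · intro h0
        by_cases hb : v i.castSucc = ⊥
        · refine ⟨hb, ?_⟩
          intro hb2
          rw [hb, hb2] at h0
          haveI : Finite (↥(⊥ : Subgroup Q)) := Finite.of_subsingleton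
          exact relindex_ne_zero_of_finite h0
        · exfalso
          have hidx : (v i.castSucc).index ≠ 0 := index_ne_zero_of_ne_bot hb
          have hdvd := Subgroup.relIndex_dvd_index_of_le (hvmono i)
          rw [h0] at hdvd
          exact hidx (Nat.eq_zero_of_zero_dvd hdvd)
      · rintro ⟨hb, hnb⟩
        rw [hb, Subgroup.relIndex_bot_left]
        haveI := infinite_subgroup_of_ne_bot hnb
        exact Nat.card_eq_zero_of_infinite
    -- there is a unique flip index
    have hex : ∃ i : Fin l, P i := by
      by_contra hno
      push_neg at hno
      have hall : ∀ i : Fin (l + 1), v i = ⊥ := by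
        intro i
        induction i using Fin.induction with
        | zero => exact hv0
        | succ j ih =>
          by_contra hne
          exact (hno j) ⟨ih, hne⟩
      have : (⊤ : Subgroup Q) = ⊥ := hvlast ▸ hall (Fin.last l)
      have hnt : Nontrivial Q := inferInstance
      obtain ⟨a, ha⟩ := exists_ne (1 : Q)
      exact ha ((Subgroup.mem_bot).mp (this ▸ Subgroup.mem_top a))
    obtain ⟨i₀, hi₀⟩ := hex
    have huniq : ∀ j : Fin l, P j ↔ j = i₀ := by
      intro j
      constructor
      · intro hj
        by_contra hne
        rcases lt_or_gt_of_ne hne with h | h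
        · -- j < i₀ : v j.succ ≤ v i₀.castSucc = ⊥
          have hle : (j.succ : Fin (l + 1)) ≤ i₀.castSucc := by
            rw [Fin.le_def]
            simp only [Fin.val_succ, Fin.coe_castSucc]
            exact h
          exact hj.2 (le_bot_iff.mp (hi₀.1 ▸ hmono hle))
        · have hle : (i₀.succ : Fin (l + 1)) ≤ j.castSucc := by
            rw [Fin.le_def]
            simp only [Fin.val_succ, Fin.coe_castSucc]
            exact h
          exact hi₀.2 (le_bot_iff.mp (hj.1 ▸ hmono hle))
      · rintro rfl; exact hi₀
    classical
    unfold relCount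
    calc (∑ i : Fin l, if (v i.castSucc).relIndex (v i.succ) = 0 then 1 else 0)
        = ∑ i : Fin l, if i = i₀ then 1 else 0 :=
          Finset.sum_congr rfl fun i _ => if_congr ((hiff i).trans (huniq i)) rfl rfl
      _ = 1 := by rw [Finset.sum_ite_eq' Finset.univ i₀ (fun _ => 1)]; simp
  · -- finite case
    haveI : Finite Q := by
      have := Nat.card_ne_zero.mp hQ
      exact this.2
    rw [if_neg hQ]
    unfold relCount
    refine Finset.sum_eq_zero fun i _ => ?_
    rw [if_neg relindex_ne_zero_of_finite]

end Aux

section Transfer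

variable {G : Type*} [Group G]

/-- Transfer a series in `G` ending at `N` to a genuine series of the subgroup `N`. -/
lemma series_subgroupOf {m : ℕ} (N : Subgroup G) (u : Fin (m + 1) → Subgroup G)
    (h0 : u 0 = ⊥) (hlast : u (Fin.last m) = N)
    (hmono : ∀ i : Fin m, u i.castSucc ≤ u i.succ)
    (hstep : ∀ i : Fin m, ∃ h : ((u i.castSucc).subgroupOf (u i.succ)).Normal,
      CyclicQuotient ((u i.castSucc).subgroupOf (u i.succ)) h) :
    IsCyclicFactorSeries (fun i => (u i).subgroupOf N) ∧
      relCount (fun i => (u i).subgroupOf N) = relCount u := by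
  have hm : Monotone u := Fin.monotone_iff_le_succ.mpr hmono
  have hleN : ∀ i, u i ≤ N := fun i => hlast ▸ hm (Fin.le_last i)
  constructor
  · refine ⟨by show (u 0).subgroupOf N = ⊥; rw [h0, Subgroup.bot_subgroupOf],
      by show (u (Fin.last m)).subgroupOf N = ⊤; rw [hlast, Subgroup.subgroupOf_self],
      fun i => Subgroup.comap_mono (hmono i), fun i => ?_⟩
    show ∃ h : (((u i.castSucc).subgroupOf N).subgroupOf ((u i.succ).subgroupOf N)).Normal,
      CyclicQuotient (((u i.castSucc).subgroupOf N).subgroupOf ((u i.succ).subgroupOf N)) h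
    obtain ⟨hnor, hcyc⟩ := hstep i
    letI := hnor
    letI : IsCyclic (↥(u i.succ) ⧸ (u i.castSucc).subgroupOf (u i.succ)) := hcyc
    set e := Subgroup.subgroupOfEquivOfLe (hleN i.succ)
    set φ : ↥((u i.succ).subgroupOf N) →*
        (↥(u i.succ) ⧸ (u i.castSucc).subgroupOf (u i.succ)) :=
      (QuotientGroup.mk' ((u i.castSucc).subgroupOf (u i.succ))).comp e.toMonoidHom with hφ
    have hker : ((u i.castSucc).subgroupOf N).subgroupOf ((u i.succ).subgroupOf N) = φ.ker := by
      ext x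
      simp only [Subgroup.mem_subgroupOf, MonoidHom.mem_ker, hφ, MonoidHom.comp_apply,
        QuotientGroup.mk'_apply, QuotientGroup.eq_one_iff, MulEquiv.coe_toMonoidHom]
      rfl
    rw [hker]
    exact exists_cyclicQuotient_ker φ
  · unfold relCount
    refine Finset.sum_congr rfl fun i _ => ?_
    show (if ((u i.castSucc).subgroupOf N).relIndex ((u i.succ).subgroupOf N) = 0 then 1 else 0)
      = (if (u i.castSucc).relIndex (u i.succ) = 0 then 1 else 0)
    rw [Subgroup.relIndex_subgroupOf (hleN i.succ)]

/-- The top factor: normality and cyclicity of the quotient transfer from `⊤`. -/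
lemma exists_normal_top {N T : Subgroup G} (hT : T = ⊤) (hle : N ≤ T)
    (hnor : (N.subgroupOf T).Normal) (hcyc : CyclicQuotient (N.subgroupOf T) hnor) :
    ∃ hN : N.Normal, CyclicQuotient N hN := by
  subst hT
  have hN : N.Normal := by
    rw [Subgroup.normal_subgroupOf_iff le_top] at hnor
    exact ⟨fun n hn g => hnor n g hn trivial⟩
  refine ⟨hN, ?_⟩
  letI := hnor
  letI : IsCyclic (↥(⊤ : Subgroup G) ⧸ N.subgroupOf ⊤) := hcyc
  letI := hN
  show IsCyclic (G ⧸ N)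
  have hsurj : Function.Surjective
      (QuotientGroup.map (N.subgroupOf ⊤) N (Subgroup.subtype ⊤) le_rfl) := by
    intro q
    obtain ⟨g, rfl⟩ := QuotientGroup.mk_surjective q
    exact ⟨QuotientGroup.mk ⟨g, trivial⟩, rfl⟩
  exact isCyclic_of_surjective _ hsurj

lemma subgroupOf_sup_of_le {A B T : Subgroup G} (hA : A ≤ T) (hB : B ≤ T) :
    (A ⊔ B).subgroupOf T = A.subgroupOf T ⊔ B.subgroupOf T := by
  apply Subgroup.map_injective (Subgroup.subtype_injective T)
  rw [Subgroup.map_sup, Subgroup.subgroupOf_map_subtype, Subgroup.subgroupOf_map_subtype,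
    Subgroup.subgroupOf_map_subtype, inf_eq_left.mpr (sup_le hA hB),
    inf_eq_left.mpr hA, inf_eq_left.mpr hB]

end Transfer

section Main

universe u

/-- Hirsch's theorem, `relindex` version, by induction on the length of the first series. -/
theorem relCount_eq_relCount : ∀ (k : ℕ) (G : Type u) [Group G]
    (s : Fin (k + 1) → Subgroup G), IsCyclicFactorSeries s →
    ∀ (l : ℕ) (t : Fin (l + 1) → Subgroup G), IsCyclicFactorSeries t →
    relCount s = relCount t := by
  intro k
  induction k with
  | zero =>
    intro G _ s hs l t ht
    obtain ⟨hs0, hslast, _, _⟩ := hs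
    obtain ⟨ht0, htlast, _, _⟩ := ht
    have hbt : (⊥ : Subgroup G) = ⊤ := by
      rw [← hs0, ← hslast, Subsingleton.elim (0 : Fin 1) (Fin.last 0)]
    haveI : Subsingleton G := by
      constructor
      intro a b
      have ha : a ∈ (⊥ : Subgroup G) := hbt ▸ Subgroup.mem_top a
      have hb : b ∈ (⊥ : Subgroup G) := hbt ▸ Subgroup.mem_top b
      rw [Subgroup.mem_bot] at ha hb
      rw [ha, hb]
    haveI : Finite G := Finite.of_subsingleton
    have h1 : relCount s = 0 := by
      unfold relCount
      rw [Finset.univ_eq_empty, Finset.sum_empty]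
    have h2 : relCount t = 0 := by
      unfold relCount
      exact Finset.sum_eq_zero fun i _ => if_neg relindex_ne_zero_of_finite
    rw [h1, h2]
  | succ k ih =>
    intro G _ s hs l t ht
    obtain ⟨hs0, hslast, hsmono, hsstep⟩ := hs
    obtain ⟨ht0, htlast, htmono, htstep⟩ := ht
    set N : Subgroup G := s ((Fin.last k).castSucc) with hN_def
    have htop : s ((Fin.last k).succ) = ⊤ := by rw [Fin.succ_last]; exact hslast
    have hNle : N ≤ s ((Fin.last k).succ) := hsmono (Fin.last k)
    obtain ⟨hN, hcycN⟩ := exists_normal_top htop hNle (hsstep (Fin.last k)).choose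
      (hsstep (Fin.last k)).choose_spec
    letI := hN
    letI : IsCyclic (G ⧸ N) := hcycN
    set π : G →* G ⧸ N := QuotientGroup.mk' N with hπ
    have hπsurj : Function.Surjective π := QuotientGroup.mk'_surjective N
    have hkerπ : π.ker = N := QuotientGroup.ker_mk' N
    -- the prefix series for `N` coming from `s`
    set u : Fin (k + 1) → Subgroup G := fun i => s i.castSucc with hu
    have hu0 : u 0 = ⊥ := by
      show s ((0 : Fin (k + 1)).castSucc) = ⊥
      rw [Fin.castSucc_zero]; exact hs0
    have hulast : u (Fin.last k) = N := rfl
    have hu_mono : ∀ i : Fin k, u i.castSucc ≤ u i.succ := fun i => hsmono i.castSucc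
    have hu_step : ∀ i : Fin k, ∃ h : ((u i.castSucc).subgroupOf (u i.succ)).Normal,
        CyclicQuotient ((u i.castSucc).subgroupOf (u i.succ)) h := fun i => hsstep i.castSucc
    obtain ⟨hs'_series, hs'_count⟩ := series_subgroupOf N u hu0 hulast hu_mono hu_step
    -- the intersection series for `N` coming from `t`
    set a : Fin (l + 1) → Subgroup G := fun i => t i ⊓ N with ha
    have ha0 : a 0 = ⊥ := by show t 0 ⊓ N = ⊥; rw [ht0, bot_inf_eq]
    have halast : a (Fin.last l) = N := by show t (Fin.last l) ⊓ N = N; rw [htlast, top_inf_eq]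
    have ha_mono : ∀ i : Fin l, a i.castSucc ≤ a i.succ :=
      fun i => inf_le_inf_right N (htmono i)
    have ha_step : ∀ i : Fin l, ∃ h : ((a i.castSucc).subgroupOf (a i.succ)).Normal,
        CyclicQuotient ((a i.castSucc).subgroupOf (a i.succ)) h := by
      intro i
      obtain ⟨hnor, hcyc⟩ := htstep i
      letI := hnor
      letI : IsCyclic (↥(t i.succ) ⧸ (t i.castSucc).subgroupOf (t i.succ)) := hcyc
      have hati : a i.succ ≤ t i.succ := inf_le_left
      set φ : ↥(a i.succ) →* (↥(t i.succ) ⧸ (t i.castSucc).subgroupOf (t i.succ)) :=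
        (QuotientGroup.mk' ((t i.castSucc).subgroupOf (t i.succ))).comp
          (Subgroup.inclusion hati) with hφ
      have hker : (a i.castSucc).subgroupOf (a i.succ) = φ.ker := by
        ext x
        have hxN : (x : G) ∈ N := (Subgroup.mem_inf.mp x.2).2
        simp only [Subgroup.mem_subgroupOf, MonoidHom.mem_ker, hφ, MonoidHom.comp_apply,
          QuotientGroup.mk'_apply, QuotientGroup.eq_one_iff, Subgroup.mem_inf,
          Subgroup.coe_inclusion]
        exact ⟨fun h => h.1, fun h => ⟨h, hxN⟩⟩
      rw [hker]
      exact exists_cyclicQuotient_ker φ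
    obtain ⟨ht'_series, ht'_count⟩ := series_subgroupOf N a ha0 halast ha_mono ha_step
    -- the image series for `G ⧸ N` coming from `t`
    set v : Fin (l + 1) → Subgroup (G ⧸ N) := fun i => (t i).map π with hv
    have hv0 : v 0 = ⊥ := by show (t 0).map π = ⊥; rw [ht0, Subgroup.map_bot]
    have hvlast : v (Fin.last l) = ⊤ := by
      show (t (Fin.last l)).map π = ⊤
      rw [htlast, Subgroup.map_top_of_surjective π hπsurj]
    have hv_mono : ∀ i : Fin l, v i.castSucc ≤ v i.succ :=
      fun i => Subgroup.map_mono (htmono i)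
    have hv_step : ∀ i : Fin l, ∃ h : ((v i.castSucc).subgroupOf (v i.succ)).Normal,
        CyclicQuotient ((v i.castSucc).subgroupOf (v i.succ)) h := by
      intro i
      obtain ⟨hnor, hcyc⟩ := htstep i
      letI := hnor
      letI : IsCyclic (↥(t i.succ) ⧸ (t i.castSucc).subgroupOf (t i.succ)) := hcyc
      have hmapeq : ((t i.castSucc).subgroupOf (t i.succ)).map (π.subgroupMap (t i.succ))
          = (v i.castSucc).subgroupOf (v i.succ) := by
        ext y
        simp only [Subgroup.mem_map, Subgroup.mem_subgroupOf]
        constructor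
        · rintro ⟨x, hx, rfl⟩
          exact Subgroup.mem_map_of_mem π hx
        · rintro hy
          obtain ⟨x, hx, hxy⟩ := hy
          refine ⟨⟨x, htmono i hx⟩, hx, ?_⟩
          exact Subtype.ext hxy
      rw [← hmapeq]
      exact exists_cyclicQuotient_map _ (π.subgroupMap_surjective (t i.succ)) _ hcyc
    have hvseries : IsCyclicFactorSeries v := ⟨hv0, hvlast, hv_mono, hv_step⟩
    -- the key splitting of each factor of `t`
    have hsplit : ∀ i : Fin l,
        (if (t i.castSucc).relIndex (t i.succ) = 0 then 1 else 0)
          = (if (a i.castSucc).relIndex (a i.succ) = 0 then 1 else 0)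
            + ((if (v i.castSucc).relIndex (v i.succ) = 0 then 1 else 0) : ℕ) := by
      intro i
      obtain ⟨hnor, hcyc⟩ := htstep i
      letI := hnor
      letI : IsCyclic (↥(t i.succ) ⧸ (t i.castSucc).subgroupOf (t i.succ)) := hcyc
      have hT : t i.castSucc ≤ t i.succ := htmono i
      set C : Subgroup G := t i.castSucc ⊔ (t i.succ ⊓ N) with hC
      have hT0C : t i.castSucc ≤ C := le_sup_left
      have hCT1 : C ≤ t i.succ := sup_le hT inf_le_left
      -- first identity
      have h5 : (t i.castSucc).subgroupOf (t i.succ) ⊓ (t i.succ ⊓ N).subgroupOf (t i.succ)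
          = (t i.castSucc ⊓ N).subgroupOf (t i.succ) := by
        ext x
        have hx : (x : G) ∈ t i.succ := x.2
        simp only [Subgroup.mem_inf, Subgroup.mem_subgroupOf, Subgroup.mem_inf]
        tauto
      have hid1 : (t i.castSucc).relIndex C = (a i.castSucc).relIndex (a i.succ) := by
        rw [← Subgroup.relIndex_subgroupOf hCT1]
        rw [show C.subgroupOf (t i.succ)
            = (t i.succ ⊓ N).subgroupOf (t i.succ) ⊔ (t i.castSucc).subgroupOf (t i.succ) by
          rw [hC, sup_comm]
          exact subgroupOf_sup_of_le inf_le_left hT]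
        rw [Subgroup.relIndex_sup_right, ← Subgroup.inf_relIndex_right, h5]
        show ((a i.castSucc).subgroupOf (t i.succ)).relIndex ((a i.succ).subgroupOf (t i.succ))
          = _
        rw [Subgroup.relIndex_subgroupOf inf_le_left]
      -- Dedekind identity
      have hded : (t i.castSucc ⊔ N) ⊓ t i.succ = C := by
        apply le_antisymm
        · rintro x hx
          obtain ⟨hx1, hx2⟩ := Subgroup.mem_inf.mp hx
          have hx1' : x ∈ ((t i.castSucc : Set G) * (N : Set G)) := by
            rw [← Subgroup.mul_normal]
            exact hx1
          obtain ⟨h, hh, n, hn, rfl⟩ := hx1'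
          have hnT : n ∈ t i.succ := (mul_mem_cancel_left (hT hh)).mp hx2
          have hsub : t i.succ ⊓ N ≤ C := le_sup_right
          exact mul_mem (hT0C hh) (hsub (Subgroup.mem_inf.mpr ⟨hnT, hn⟩))
        · exact sup_le (le_inf le_sup_left hT)
            (le_inf (le_trans inf_le_right le_sup_right) inf_le_left)
      -- second identity
      have hid2 : C.relIndex (t i.succ) = (v i.castSucc).relIndex (v i.succ) := by
        have h1 : C.relIndex (t i.succ) = (t i.castSucc ⊔ N).relIndex (t i.succ) := by
          rw [← Subgroup.inf_relIndex_right (t i.castSucc ⊔ N) (t i.succ), hded]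
        have h2 : t i.castSucc ⊔ N = (v i.castSucc).comap π := by
          show _ = ((t i.castSucc).map π).comap π
          rw [Subgroup.comap_map_eq, hkerπ]
        rw [h1, h2, Subgroup.relIndex_comap]
      -- exclusivity: not both infinite
      have hexcl : ¬ ((t i.castSucc).relIndex C = 0 ∧ C.relIndex (t i.succ) = 0) := by
        rintro ⟨hA0, hB0⟩
        set φS : ↥(C.subgroupOf (t i.succ)) →*
            (↥(t i.succ) ⧸ (t i.castSucc).subgroupOf (t i.succ)) :=
          (QuotientGroup.mk' ((t i.castSucc).subgroupOf (t i.succ))).comp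
            (C.subgroupOf (t i.succ)).subtype with hφS
        have hrange : φS.range
            = (C.subgroupOf (t i.succ)).map
                (QuotientGroup.mk' ((t i.castSucc).subgroupOf (t i.succ))) := by
          rw [hφS, MonoidHom.range_comp, Subgroup.range_subtype]
        have hkerS : φS.ker
            = ((t i.castSucc).subgroupOf (t i.succ)).subgroupOf (C.subgroupOf (t i.succ)) := by
          ext x
          simp only [hφS, MonoidHom.mem_ker, MonoidHom.comp_apply, QuotientGroup.mk'_apply,
            QuotientGroup.eq_one_iff, Subgroup.mem_subgroupOf, Subgroup.coe_subtype]
        have hcardS : Nat.card φS.range = (t i.castSucc).relIndex C := by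
          rw [← Nat.card_congr (QuotientGroup.quotientKerEquivRange φS).toEquiv, hkerS,
            ← Subgroup.index_eq_card]
          show ((t i.castSucc).subgroupOf (t i.succ)).relIndex (C.subgroupOf (t i.succ)) = _
          rw [Subgroup.relIndex_subgroupOf hCT1]
        have hSnebot : φS.range ≠ ⊥ := by
          intro hbot
          rw [hbot] at hcardS
          rw [← hcardS] at hA0
          simp at hA0
        have hSidx : φS.range.index ≠ 0 := index_ne_zero_of_ne_bot hSnebot
        have hidx : φS.range.index = C.relIndex (t i.succ) := by
          rw [hrange,
            ← Subgroup.index_comap_of_surjective _ (QuotientGroup.mk'_surjective _),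
            Subgroup.comap_map_eq, QuotientGroup.ker_mk',
            sup_eq_left.mpr (fun x hx => hT0C hx :
              (t i.castSucc).subgroupOf (t i.succ) ≤ C.subgroupOf (t i.succ))]
          rfl
        exact hSidx (hidx.trans hB0)
      -- combine
      have hmul : (t i.castSucc).relIndex (t i.succ)
          = (t i.castSucc).relIndex C * C.relIndex (t i.succ) :=
        (Subgroup.relIndex_mul_relIndex _ C _ hT0C hCT1).symm
      rw [hmul, ← hid1, ← hid2]
      rcases eq_or_ne ((t i.castSucc).relIndex C) 0 with hA | hA
      · have hB : C.relIndex (t i.succ) ≠ 0 := fun h => hexcl ⟨hA, h⟩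
        rw [if_pos hA, if_neg hB, if_pos (by rw [hA, zero_mul])]
      · rcases eq_or_ne (C.relIndex (t i.succ)) 0 with hB | hB
        · rw [if_neg hA, if_pos hB, if_pos (by rw [hB, mul_zero])]
        · rw [if_neg hA, if_neg hB,
            if_neg (fun h => (Nat.mul_eq_zero.mp h).elim hA hB)]
    -- assemble the counts
    have hcount_t : relCount t = relCount a + relCount v := by
      unfold relCount
      rw [← Finset.sum_add_distrib]
      exact Finset.sum_congr rfl fun i _ => hsplit i
    have hcount_s : relCount s = relCount u + (if N.index = 0 then 1 else 0) := by
      unfold relCount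
      rw [Fin.sum_univ_castSucc]
      congr 1
      show (if N.relIndex (s (Fin.last k).succ) = 0 then 1 else 0)
        = if N.index = 0 then 1 else 0
      rw [htop, Subgroup.relIndex_top_right]
    have hvcount : relCount v = (if N.index = 0 then 1 else 0) := by
      have hcard : Nat.card (G ⧸ N) = N.index := (Subgroup.index_eq_card N).symm
      rw [relCount_of_isCyclic v hvseries, hcard]
    have hIH := ih ↥N (fun i => (u i).subgroupOf N) hs'_series l
      (fun i => (a i).subgroupOf N) ht'_series
    calc relCount s = relCount u + (if N.index = 0 then 1 else 0) := hcount_s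
      _ = relCount (fun i => (u i).subgroupOf N) + (if N.index = 0 then 1 else 0) := by
          rw [hs'_count]
      _ = relCount (fun i => (a i).subgroupOf N) + (if N.index = 0 then 1 else 0) := by
          rw [hIH]
      _ = relCount a + (if N.index = 0 then 1 else 0) := by rw [ht'_count]
      _ = relCount a + relCount v := by rw [hvcount]
      _ = relCount t := hcount_t.symm

end Main

/-- Hirsch's theorem: the number of infinite cyclic factors in a subnormal series with
cyclic factors of a polycyclic group does not depend on the chosen series. -/
theorem hirsch_number_well_defined (G : Type*) [Group G]
    {k l : ℕ} (s : Fin (k + 1) → Subgroup G) (t : Fin (l + 1) → Subgroup G)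
    (hs : IsCyclicFactorSeries s) (ht : IsCyclicFactorSeries t) :
    infFactorCount s = infFactorCount t := by
  rw [infFactorCount_eq_relCount, infFactorCount_eq_relCount]
  exact relCount_eq_relCount k G s hs l t ht
end

section
/- Let G be a group, u : G → ℝ a nonzero homomorphism, and A a k×k matrix over the Novikov ring Λ_u all of whose entries are u-positive (every group element in the support of every entry has strictly positive u-value). Then the matrix Id − A is invertible over Λ_u, with inverse Id + Σ_{k≥1} A^k. -/
variable {G : Type*} [Group G]

/-- `f`, viewed as a formal series `Σ f(g)·g`, lies in the Novikov ring `Λ_u`: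
for every `A`, only finitely many group elements of the support have `u`-value `< A`. -/
def NovikovCond (u : G → ℝ) (f : G → ℤ) : Prop :=
  ∀ A : ℝ, {g : G | f g ≠ 0 ∧ u g < A}.Finite

/-- Convolution product of formal series on `G` (the product of the group ring,
extended to Novikov series). -/
noncomputable def conv (f h : G → ℤ) : G → ℤ :=
  fun g => ∑ᶠ a : G, f a * h (a⁻¹ * g)

open Classical in
/-- The series `1` (the unit of the group ring). -/
noncomputable def deltaOne : G → ℤ := fun g => if g = 1 then 1 else 0

/-- Convolution powers of a formal series. -/
noncomputable def convPow (f : G → ℤ) : ℕ → (G → ℤ)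
  | 0 => deltaOne
  | n + 1 => conv f (convPow f n)

variable {k : ℕ}

/-- Product of `k × k` matrices with entries formal Novikov series. -/
noncomputable def matConvMul (A B : Fin k → Fin k → (G → ℤ)) : Fin k → Fin k → (G → ℤ) :=
  fun i j => ∑ l : Fin k, conv (A i l) (B l j)

open Classical in
/-- The identity matrix over the Novikov ring. -/
noncomputable def matDelta : Fin k → Fin k → (G → ℤ) :=
  fun i j => if i = j then deltaOne else 0

/-- Powers of a matrix over the Novikov ring. -/
noncomputable def matConvPow (A : Fin k → Fin k → (G → ℤ)) : ℕ → (Fin k → Fin k → (G → ℤ))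
  | 0 => matDelta
  | n + 1 => matConvMul A (matConvPow A n)


set_option linter.unusedSectionVars false
set_option maxHeartbeats 1000000

section NovikovAux

variable {u : G → ℝ}

lemma u_one (hu : ∀ a b : G, u (a * b) = u a + u b) : u 1 = 0 := by
  have := hu 1 1; simp at this; linarith

lemma u_inv_mul (hu : ∀ a b : G, u (a * b) = u a + u b) (a g : G) :
    u (a⁻¹ * g) = u g - u a := by
  have h := hu a (a⁻¹ * g)
  rw [mul_inv_cancel_left] at h
  linarith

lemma nc_bdd {f : G → ℤ} (hf : NovikovCond u f) :
    ∃ c : ℝ, ∀ g, f g ≠ 0 → c ≤ u g := by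
  classical
  refine ⟨(insert (0:ℝ) ((hf 0).toFinset.image u)).min' ⟨0, Finset.mem_insert_self _ _⟩,
    fun g hg => ?_⟩
  rcases lt_or_ge (u g) 0 with h | h
  · exact Finset.min'_le _ _ (Finset.mem_insert_of_mem
      (Finset.mem_image.2 ⟨g, (hf 0).mem_toFinset.2 ⟨hg, h⟩, rfl⟩))
  · exact le_trans (Finset.min'_le _ 0 (Finset.mem_insert_self _ _)) h

lemma nc_pos_bdd {f : G → ℤ} (hf : NovikovCond u f) (hp : ∀ g, f g ≠ 0 → 0 < u g) :
    ∃ ε : ℝ, 0 < ε ∧ ∀ g, f g ≠ 0 → ε ≤ u g := by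
  classical
  set s : Finset ℝ := insert 1 ((hf 1).toFinset.image u) with hs
  have hne : s.Nonempty := ⟨1, Finset.mem_insert_self _ _⟩
  have hposall : ∀ x ∈ s, 0 < x := by
    intro x hx
    rcases Finset.mem_insert.1 hx with rfl | hx
    · exact one_pos
    · obtain ⟨g, hg, rfl⟩ := Finset.mem_image.1 hx
      exact hp g ((hf 1).mem_toFinset.1 hg).1
  refine ⟨s.min' hne, hposall _ (s.min'_mem hne), fun g hg => ?_⟩
  rcases lt_or_ge (u g) 1 with h | h
  · exact Finset.min'_le _ _ (Finset.mem_insert_of_mem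
      (Finset.mem_image.2 ⟨g, (hf 1).mem_toFinset.2 ⟨hg, h⟩, rfl⟩))
  · exact le_trans (Finset.min'_le _ 1 (Finset.mem_insert_self _ _)) h

lemma conv_eq_sum {f h : G → ℤ} {g : G} {s : Finset G}
    (hs : ∀ a, f a * h (a⁻¹ * g) ≠ 0 → a ∈ s) :
    conv f h g = ∑ a ∈ s, f a * h (a⁻¹ * g) :=
  finsum_eq_finset_sum_of_support_subset _ (fun a ha => hs a ha)

lemma conv_exists {f h : G → ℤ} {g : G} (hc : conv f h g ≠ 0) :
    ∃ a, f a ≠ 0 ∧ h (a⁻¹ * g) ≠ 0 := by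
  by_contra hall
  push_neg at hall
  refine hc ?_
  show (∑ᶠ a : G, f a * h (a⁻¹ * g)) = 0
  apply finsum_eq_zero_of_forall_eq_zero
  intro a
  by_cases hfa : f a = 0
  · simp [hfa]
  · simp [hall a hfa]

lemma conv_bdd (hu : ∀ a b : G, u (a * b) = u a + u b) {f h : G → ℤ} {c d : ℝ}
    (hc : ∀ x, f x ≠ 0 → c ≤ u x) (hd : ∀ x, h x ≠ 0 → d ≤ u x)
    {g : G} (hg : conv f h g ≠ 0) : c + d ≤ u g := by
  obtain ⟨a, hfa, hha⟩ := conv_exists hg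
  have h3 := u_inv_mul hu a g
  have h1 := hc a hfa
  have h2 := hd _ hha
  linarith

lemma supp_fin (hu : ∀ a b : G, u (a * b) = u a + u b) {f h : G → ℤ}
    (hf : NovikovCond u f) {d : ℝ} (hd : ∀ x, h x ≠ 0 → d ≤ u x) (g : G) :
    (Function.support fun a => f a * h (a⁻¹ * g)).Finite := by
  apply (hf (u g - d + 1)).subset
  intro a ha
  have ha' : f a * h (a⁻¹ * g) ≠ 0 := ha
  have h1 : f a ≠ 0 := left_ne_zero_of_mul ha'
  have h2 : h (a⁻¹ * g) ≠ 0 := right_ne_zero_of_mul ha'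
  have h3 := hd _ h2
  have h4 := u_inv_mul hu a g
  exact ⟨h1, by linarith⟩

lemma nc_conv (hu : ∀ a b : G, u (a * b) = u a + u b) {f h : G → ℤ}
    (hf : NovikovCond u f) (hh : NovikovCond u h) :
    NovikovCond u (conv f h) := by
  obtain ⟨c, hc⟩ := nc_bdd hf
  obtain ⟨d, hd⟩ := nc_bdd hh
  intro B
  apply Set.Finite.subset (((hf (B - d)).prod (hh (B - c))).image fun p => p.1 * p.2)
  rintro g ⟨hg, hgB⟩
  obtain ⟨a, hfa, hha⟩ := conv_exists hg
  have huam := u_inv_mul hu a g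
  have h1 := hc a hfa
  have h2 := hd _ hha
  exact ⟨(a, a⁻¹ * g), ⟨⟨hfa, by linarith⟩, ⟨hha, by linarith⟩⟩, by simp⟩

lemma conv_zero_left (h : G → ℤ) : conv 0 h = 0 := by
  funext g
  show (∑ᶠ a : G, (0 : G → ℤ) a * h (a⁻¹ * g)) = 0
  apply finsum_eq_zero_of_forall_eq_zero
  intro a; simp

lemma conv_zero_right (f : G → ℤ) : conv f 0 = 0 := by
  funext g
  show (∑ᶠ a : G, f a * (0 : G → ℤ) (a⁻¹ * g)) = 0
  apply finsum_eq_zero_of_forall_eq_zero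
  intro a; simp

lemma conv_deltaOne_left (h : G → ℤ) : conv deltaOne h = h := by
  classical
  funext g
  show (∑ᶠ a : G, deltaOne a * h (a⁻¹ * g)) = h g
  rw [finsum_eq_single _ (1 : G) (fun b hb => by simp [deltaOne, hb])]
  simp [deltaOne]

lemma conv_deltaOne_right (f : G → ℤ) : conv f deltaOne = f := by
  classical
  funext g
  show (∑ᶠ a : G, f a * deltaOne (a⁻¹ * g)) = f g
  rw [finsum_eq_single _ g (fun b hb => by simp [deltaOne, inv_mul_eq_one, hb])]
  simp [deltaOne]

lemma conv_add_right (hu : ∀ a b : G, u (a * b) = u a + u b) {f h₁ h₂ : G → ℤ}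
    (hf : NovikovCond u f) {d₁ d₂ : ℝ}
    (hd₁ : ∀ x, h₁ x ≠ 0 → d₁ ≤ u x) (hd₂ : ∀ x, h₂ x ≠ 0 → d₂ ≤ u x) (g : G) :
    conv f (fun x => h₁ x + h₂ x) g = conv f h₁ g + conv f h₂ g := by
  show (∑ᶠ a : G, f a * (h₁ (a⁻¹ * g) + h₂ (a⁻¹ * g))) = _
  rw [finsum_congr (fun a => mul_add (f a) (h₁ (a⁻¹ * g)) (h₂ (a⁻¹ * g))),
    finsum_add_distrib (supp_fin hu hf hd₁ g) (supp_fin hu hf hd₂ g)]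
  rfl

lemma conv_sub_right (hu : ∀ a b : G, u (a * b) = u a + u b) {f h₁ h₂ : G → ℤ}
    (hf : NovikovCond u f) {d₁ d₂ : ℝ}
    (hd₁ : ∀ x, h₁ x ≠ 0 → d₁ ≤ u x) (hd₂ : ∀ x, h₂ x ≠ 0 → d₂ ≤ u x) (g : G) :
    conv f (fun x => h₁ x - h₂ x) g = conv f h₁ g - conv f h₂ g := by
  show (∑ᶠ a : G, f a * (h₁ (a⁻¹ * g) - h₂ (a⁻¹ * g))) = _
  rw [finsum_congr (fun a => mul_sub (f a) (h₁ (a⁻¹ * g)) (h₂ (a⁻¹ * g))),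
    finsum_sub_distrib (supp_fin hu hf hd₁ g) (supp_fin hu hf hd₂ g)]
  rfl

lemma conv_sub_left (hu : ∀ a b : G, u (a * b) = u a + u b) {f₁ f₂ h : G → ℤ}
    (hf₁ : NovikovCond u f₁) (hf₂ : NovikovCond u f₂) {d : ℝ}
    (hd : ∀ x, h x ≠ 0 → d ≤ u x) (g : G) :
    conv (fun x => f₁ x - f₂ x) h g = conv f₁ h g - conv f₂ h g := by
  show (∑ᶠ a : G, (f₁ a - f₂ a) * h (a⁻¹ * g)) = _
  rw [finsum_congr (fun a => sub_mul (f₁ a) (f₂ a) (h (a⁻¹ * g))),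
    finsum_sub_distrib (supp_fin hu hf₁ hd g) (supp_fin hu hf₂ hd g)]
  rfl

lemma conv_add_left (hu : ∀ a b : G, u (a * b) = u a + u b) {f₁ f₂ h : G → ℤ}
    (hf₁ : NovikovCond u f₁) (hf₂ : NovikovCond u f₂) {d : ℝ}
    (hd : ∀ x, h x ≠ 0 → d ≤ u x) (g : G) :
    conv (fun x => f₁ x + f₂ x) h g = conv f₁ h g + conv f₂ h g := by
  show (∑ᶠ a : G, (f₁ a + f₂ a) * h (a⁻¹ * g)) = _
  rw [finsum_congr (fun a => add_mul (f₁ a) (f₂ a) (h (a⁻¹ * g))),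
    finsum_add_distrib (supp_fin hu hf₁ hd g) (supp_fin hu hf₂ hd g)]
  rfl

lemma nc_zero : NovikovCond u (0 : G → ℤ) := by
  intro B
  apply Set.finite_empty.subset
  rintro g ⟨hg, -⟩
  simp at hg

lemma nc_deltaOne : NovikovCond u (deltaOne : G → ℤ) := by
  classical
  intro B
  apply (Set.finite_singleton (1 : G)).subset
  rintro g ⟨hg, -⟩
  by_contra hne
  simp only [Set.mem_singleton_iff] at hne
  simp [deltaOne, hne] at hg

lemma nc_add {f h : G → ℤ} (hf : NovikovCond u f) (hh : NovikovCond u h) :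
    NovikovCond u (fun g => f g + h g) := by
  intro B
  apply ((hf B).union (hh B)).subset
  rintro g ⟨hg, hB⟩
  by_cases h1 : f g = 0
  · right; exact ⟨fun h2 => hg (by simp [h1, h2]), hB⟩
  · left; exact ⟨h1, hB⟩

lemma nc_finsetSum {ι : Type*} (s : Finset ι) (F : ι → (G → ℤ)) :
    (∀ l ∈ s, NovikovCond u (F l)) → NovikovCond u (fun g => ∑ l ∈ s, F l g) := by
  classical
  refine Finset.induction_on s ?_ ?_
  · intro _ B
    apply Set.finite_empty.subset
    rintro g ⟨hg, -⟩
    simp at hg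
  · intro a s ha ih h
    have h1 : NovikovCond u (fun g => F a g + ∑ l ∈ s, F l g) :=
      nc_add (h a (Finset.mem_insert_self a s))
        (ih fun l hl => h l (Finset.mem_insert_of_mem hl))
    intro B
    apply (h1 B).subset
    rintro g ⟨hg, hB⟩
    refine ⟨?_, hB⟩
    simpa [Finset.sum_insert ha] using hg

lemma conv_sum_right (hu : ∀ a b : G, u (a * b) = u a + u b) {f : G → ℤ}
    (hf : NovikovCond u f) {ι : Type*} (s : Finset ι) (H : ι → (G → ℤ)) :
    (∀ l ∈ s, NovikovCond u (H l)) → ∀ g : G,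
      conv f (fun x => ∑ l ∈ s, H l x) g = ∑ l ∈ s, conv f (H l) g := by
  classical
  refine Finset.induction_on s ?_ ?_
  · intro _ g
    simp only [Finset.sum_empty]
    show (∑ᶠ a : G, f a * (0:ℤ)) = 0
    simp
  · intro a s ha ih h g
    obtain ⟨d₁, hd₁⟩ := nc_bdd (h a (Finset.mem_insert_self a s))
    obtain ⟨d₂, hd₂⟩ := nc_bdd (nc_finsetSum s H (fun l hl => h l (Finset.mem_insert_of_mem hl)))
    simp only [Finset.sum_insert ha]
    rw [conv_add_right hu hf hd₁ hd₂ g, ih (fun l hl => h l (Finset.mem_insert_of_mem hl)) g]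

lemma conv_sum_left (hu : ∀ a b : G, u (a * b) = u a + u b) {h : G → ℤ} {d : ℝ}
    (hd : ∀ x, h x ≠ 0 → d ≤ u x) {ι : Type*} (s : Finset ι) (F : ι → (G → ℤ)) :
    (∀ l ∈ s, NovikovCond u (F l)) → ∀ g : G,
      conv (fun x => ∑ l ∈ s, F l x) h g = ∑ l ∈ s, conv (F l) h g := by
  classical
  refine Finset.induction_on s ?_ ?_
  · intro _ g
    simp only [Finset.sum_empty]
    show (∑ᶠ a : G, (0:ℤ) * h (a⁻¹ * g)) = 0
    simp
  · intro a s ha ih h' g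
    simp only [Finset.sum_insert ha]
    rw [conv_add_left hu (h' a (Finset.mem_insert_self a s))
      (nc_finsetSum s F (fun l hl => h' l (Finset.mem_insert_of_mem hl))) hd g,
      ih (fun l hl => h' l (Finset.mem_insert_of_mem hl)) g]

lemma conv_congr_right (hu : ∀ a b : G, u (a * b) = u a + u b) {f h₁ h₂ : G → ℤ}
    (hf0 : ∀ x, f x ≠ 0 → 0 ≤ u x) {g : G} (hh : ∀ x, u x ≤ u g → h₁ x = h₂ x) :
    conv f h₁ g = conv f h₂ g := by
  show (∑ᶠ a : G, f a * h₁ (a⁻¹ * g)) = ∑ᶠ a : G, f a * h₂ (a⁻¹ * g)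
  apply finsum_congr
  intro a
  by_cases hfa : f a = 0
  · simp [hfa]
  · have h1 := hf0 a hfa
    have h2 := u_inv_mul hu a g
    rw [hh (a⁻¹ * g) (by linarith)]

lemma conv_congr_left (hu : ∀ a b : G, u (a * b) = u a + u b) {f₁ f₂ h : G → ℤ}
    (hh0 : ∀ x, h x ≠ 0 → 0 ≤ u x) {g : G} (hf : ∀ x, u x ≤ u g → f₁ x = f₂ x) :
    conv f₁ h g = conv f₂ h g := by
  show (∑ᶠ a : G, f₁ a * h (a⁻¹ * g)) = ∑ᶠ a : G, f₂ a * h (a⁻¹ * g)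
  apply finsum_congr
  intro a
  by_cases hha : h (a⁻¹ * g) = 0
  · simp [hha]
  · have h1 := hh0 _ hha
    have h2 := u_inv_mul hu a g
    rw [hf a (by linarith)]

lemma conv_assoc (hu : ∀ a b : G, u (a * b) = u a + u b) {f h p : G → ℤ}
    (hf : NovikovCond u f) (hh : NovikovCond u h) (hp : NovikovCond u p) :
    conv (conv f h) p = conv f (conv h p) := by
  classical
  obtain ⟨cf, hcf⟩ := nc_bdd hf
  obtain ⟨ch, hch⟩ := nc_bdd hh
  obtain ⟨cp, hcp⟩ := nc_bdd hp
  funext g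
  set α : ℝ := u g - ch - cp + 1 with hα
  set γ : ℝ := u g - cf - cp + 1 with hγ
  set β : ℝ := u g - cp + 1 with hβ
  set sA : Finset G := (hf α).toFinset with hsA
  set sC : Finset G := (hh γ).toFinset with hsC
  set sB : Finset G :=
    (nc_conv hu hf hh β).toFinset ∪ (sA ×ˢ sC).image (fun q => q.1 * q.2) with hsB
  have memA : ∀ a : G, f a ≠ 0 → u a < α → a ∈ sA := by
    intro a h1 h2
    rw [hsA, Set.Finite.mem_toFinset]
    exact ⟨h1, h2⟩
  have memC : ∀ c : G, h c ≠ 0 → u c < γ → c ∈ sC := by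
    intro c h1 h2
    rw [hsC, Set.Finite.mem_toFinset]
    exact ⟨h1, h2⟩
  calc conv (conv f h) p g
      = ∑ b ∈ sB, conv f h b * p (b⁻¹ * g) := by
        apply conv_eq_sum
        intro b hb
        have h1 : conv f h b ≠ 0 := left_ne_zero_of_mul hb
        have h2 : p (b⁻¹ * g) ≠ 0 := right_ne_zero_of_mul hb
        have h3 := hcp _ h2
        have h4 := u_inv_mul hu b g
        rw [hsB]
        exact Finset.mem_union_left _ ((nc_conv hu hf hh β).mem_toFinset.2 ⟨h1, by linarith⟩)
    _ = ∑ b ∈ sB, (∑ a ∈ sA, f a * h (a⁻¹ * b)) * p (b⁻¹ * g) := by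
        refine Finset.sum_congr rfl (fun b _ => ?_)
        by_cases hpb : p (b⁻¹ * g) = 0
        · rw [hpb, mul_zero, mul_zero]
        · congr 1
          apply conv_eq_sum
          intro a ha
          have h1 : f a ≠ 0 := left_ne_zero_of_mul ha
          have h2 : h (a⁻¹ * b) ≠ 0 := right_ne_zero_of_mul ha
          have h3 := hch _ h2
          have h4 := u_inv_mul hu a b
          have h5 := hcp _ hpb
          have h6 := u_inv_mul hu b g
          exact memA a h1 (by rw [hα]; linarith)
    _ = ∑ b ∈ sB, ∑ a ∈ sA, f a * h (a⁻¹ * b) * p (b⁻¹ * g) := by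
        refine Finset.sum_congr rfl (fun b _ => ?_)
        rw [Finset.sum_mul]
    _ = ∑ q ∈ sB ×ˢ sA, f q.2 * h (q.2⁻¹ * q.1) * p (q.1⁻¹ * g) := by
        rw [Finset.sum_product]
    _ = ∑ q ∈ (sB ×ˢ sA).filter
          (fun q => f q.2 * h (q.2⁻¹ * q.1) * p (q.1⁻¹ * g) ≠ 0),
          f q.2 * h (q.2⁻¹ * q.1) * p (q.1⁻¹ * g) :=
        (Finset.sum_filter_ne_zero _).symm
    _ = ∑ q ∈ (sA ×ˢ sC).filter
          (fun q => f q.1 * (h q.2 * p (q.2⁻¹ * (q.1⁻¹ * g))) ≠ 0),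
          f q.1 * (h q.2 * p (q.2⁻¹ * (q.1⁻¹ * g))) := by
        refine Finset.sum_nbij' (fun q => (q.2, q.2⁻¹ * q.1)) (fun q => (q.1 * q.2, q.1))
          ?_ ?_ ?_ ?_ ?_
        · rintro ⟨b, a⟩ hq
          rw [Finset.mem_filter, Finset.mem_product] at hq
          obtain ⟨⟨hbB, haA⟩, hne⟩ := hq
          have h1 : f a ≠ 0 := left_ne_zero_of_mul (left_ne_zero_of_mul hne)
          have h2 : h (a⁻¹ * b) ≠ 0 := right_ne_zero_of_mul (left_ne_zero_of_mul hne)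
          have h3 : p (b⁻¹ * g) ≠ 0 := right_ne_zero_of_mul hne
          rw [Finset.mem_filter, Finset.mem_product]
          have h4 := u_inv_mul hu a b
          have h5 := u_inv_mul hu b g
          have h6 := hcp _ h3
          have h7 := hcf _ h1
          refine ⟨⟨haA, memC _ h2 (by rw [hγ]; linarith)⟩, ?_⟩
          have hgrp : ((a : G)⁻¹ * b)⁻¹ * (a⁻¹ * g) = b⁻¹ * g := by
            simp [mul_inv_rev, mul_assoc]
          simpa [hgrp, mul_assoc] using hne
        · rintro ⟨a, c⟩ hq
          rw [Finset.mem_filter, Finset.mem_product] at hq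
          obtain ⟨⟨haA, hcC⟩, hne⟩ := hq
          rw [Finset.mem_filter, Finset.mem_product]
          have hb : (a * c : G) ∈ sB := by
            rw [hsB]
            exact Finset.mem_union_right _
              (Finset.mem_image.2 ⟨(a, c), Finset.mem_product.2 ⟨haA, hcC⟩, rfl⟩)
          refine ⟨⟨hb, haA⟩, ?_⟩
          have hgrp1 : (a : G)⁻¹ * (a * c) = c := by simp
          have hgrp2 : ((a * c : G))⁻¹ * g = c⁻¹ * (a⁻¹ * g) := by
            simp [mul_inv_rev, mul_assoc]
          simpa [hgrp1, hgrp2, mul_assoc] using hne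
        · rintro ⟨b, a⟩ hq
          simp
        · rintro ⟨a, c⟩ hq
          simp
        · rintro ⟨b, a⟩ hq
          have hgrp : ((a : G)⁻¹ * b)⁻¹ * (a⁻¹ * g) = b⁻¹ * g := by
            simp [mul_inv_rev, mul_assoc]
          simp [hgrp, mul_assoc]
    _ = ∑ q ∈ sA ×ˢ sC, f q.1 * (h q.2 * p (q.2⁻¹ * (q.1⁻¹ * g))) :=
        Finset.sum_filter_ne_zero _
    _ = ∑ a ∈ sA, ∑ c ∈ sC, f a * (h c * p (c⁻¹ * (a⁻¹ * g))) := by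
        rw [Finset.sum_product]
    _ = ∑ a ∈ sA, f a * conv h p (a⁻¹ * g) := by
        refine Finset.sum_congr rfl (fun a _ => ?_)
        by_cases hfa : f a = 0
        · simp [hfa]
        · rw [← Finset.mul_sum]
          congr 1
          symm
          apply conv_eq_sum
          intro c hc
          have h1 : h c ≠ 0 := left_ne_zero_of_mul hc
          have h2 : p (c⁻¹ * (a⁻¹ * g)) ≠ 0 := right_ne_zero_of_mul hc
          have h3 := hcp _ h2
          have h4 := u_inv_mul hu c (a⁻¹ * g)
          have h5 := u_inv_mul hu a g
          have h6 := hcf _ hfa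
          exact memC c h1 (by rw [hγ]; linarith)
    _ = conv f (conv h p) g := by
        symm
        apply conv_eq_sum
        intro a ha
        have h1 : f a ≠ 0 := left_ne_zero_of_mul ha
        have h2 : conv h p (a⁻¹ * g) ≠ 0 := right_ne_zero_of_mul ha
        have h3 := conv_bdd hu hch hcp h2
        have h4 := u_inv_mul hu a g
        exact memA a h1 (by rw [hα]; linarith)


variable {k : ℕ}

lemma nc_matDelta (i j : Fin k) : NovikovCond u (matDelta i j) := by
  classical
  by_cases h : i = j
  · simpa [matDelta, h] using (nc_deltaOne : NovikovCond u deltaOne)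
  · simpa [matDelta, h] using (nc_zero : NovikovCond u (0 : G → ℤ))

lemma mat_eps {A : Fin k → Fin k → (G → ℤ)}
    (hA : ∀ i j, NovikovCond u (A i j)) (hpos : ∀ i j g, A i j g ≠ 0 → 0 < u g) :
    ∃ ε : ℝ, 0 < ε ∧ ∀ i j g, A i j g ≠ 0 → ε ≤ u g := by
  classical
  choose e he1 he2 using fun p : Fin k × Fin k => nc_pos_bdd (hA p.1 p.2) (hpos p.1 p.2)
  set s : Finset ℝ := insert 1 (Finset.univ.image e) with hs
  have hne : s.Nonempty := ⟨1, Finset.mem_insert_self _ _⟩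
  refine ⟨s.min' hne, ?_, fun i j g hg => ?_⟩
  · have hall : ∀ x ∈ s, 0 < x := by
      intro x hx
      rcases Finset.mem_insert.1 hx with rfl | hx
      · exact one_pos
      · obtain ⟨p, -, rfl⟩ := Finset.mem_image.1 hx
        exact he1 p
    exact hall _ (s.min'_mem hne)
  · exact le_trans (Finset.min'_le _ _ (Finset.mem_insert_of_mem
      (Finset.mem_image.2 ⟨(i, j), Finset.mem_univ _, rfl⟩))) (he2 (i, j) g hg)

lemma matConvMul_apply (X Y : Fin k → Fin k → (G → ℤ)) (i j : Fin k) (g : G) :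
    matConvMul X Y i j g = ∑ l : Fin k, conv (X i l) (Y l j) g := by
  show (∑ l : Fin k, conv (X i l) (Y l j)) g = _
  rw [Finset.sum_apply]

lemma nc_matConvMul (hu : ∀ a b : G, u (a * b) = u a + u b)
    {X Y : Fin k → Fin k → (G → ℤ)}
    (hX : ∀ i j, NovikovCond u (X i j)) (hY : ∀ i j, NovikovCond u (Y i j)) :
    ∀ i j, NovikovCond u (matConvMul X Y i j) := by
  intro i j
  have : matConvMul X Y i j = fun g => ∑ l ∈ Finset.univ, conv (X i l) (Y l j) g := by
    funext g; exact matConvMul_apply X Y i j g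
  rw [this]
  exact nc_finsetSum _ _ (fun l _ => nc_conv hu (hX i l) (hY l j))

lemma nc_matConvPow (hu : ∀ a b : G, u (a * b) = u a + u b)
    {A : Fin k → Fin k → (G → ℤ)} (hA : ∀ i j, NovikovCond u (A i j)) :
    ∀ (m : ℕ) i j, NovikovCond u (matConvPow A m i j) := by
  intro m
  induction m with
  | zero => exact fun i j => nc_matDelta i j
  | succ m ih => exact fun i j => nc_matConvMul hu hA ih i j

lemma pow_bdd (hu : ∀ a b : G, u (a * b) = u a + u b)
    {A : Fin k → Fin k → (G → ℤ)} {ε : ℝ}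
    (hε : ∀ i j g, A i j g ≠ 0 → ε ≤ u g) :
    ∀ (m : ℕ) (i j : Fin k) (g : G), matConvPow A m i j g ≠ 0 → (m : ℝ) * ε ≤ u g := by
  intro m
  induction m with
  | zero =>
    intro i j g hg
    classical
    simp only [matConvPow] at hg
    by_cases hij : i = j
    · subst hij
      simp only [matDelta, if_pos rfl] at hg
      have hg1 : g = 1 := by
        by_contra hne
        simp [deltaOne, hne] at hg
      rw [hg1, u_one hu]
      simp
    · simp [matDelta, hij] at hg
  | succ m ih =>
    intro i j g hg
    simp only [matConvPow] at hg
    rw [matConvMul_apply] at hg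
    obtain ⟨l, -, hl⟩ := Finset.exists_ne_zero_of_sum_ne_zero hg
    obtain ⟨a, ha1, ha2⟩ := conv_exists hl
    have h1 := hε i l a ha1
    have h2 := ih l j _ ha2
    have h3 := u_inv_mul hu a g
    push_cast
    linarith

lemma matConvMul_matDelta_left (X : Fin k → Fin k → (G → ℤ)) :
    matConvMul matDelta X = X := by
  classical
  funext i j
  show (∑ l : Fin k, conv (matDelta i l) (X l j)) = X i j
  have h1 : ∀ l : Fin k, conv (matDelta i l) (X l j) = if i = l then X l j else 0 := by
    intro l
    by_cases h : i = l
    · simp [matDelta, h, conv_deltaOne_left]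
    · simp [matDelta, h, conv_zero_left]
  rw [Finset.sum_congr rfl (fun l _ => h1 l)]
  simp

lemma matConvMul_matDelta_right (X : Fin k → Fin k → (G → ℤ)) :
    matConvMul X matDelta = X := by
  classical
  funext i j
  show (∑ l : Fin k, conv (X i l) (matDelta l j)) = X i j
  have h1 : ∀ l : Fin k, conv (X i l) (matDelta l j) = if l = j then X i l else 0 := by
    intro l
    by_cases h : l = j
    · simp [matDelta, h, conv_deltaOne_right]
    · simp [matDelta, h, conv_zero_right]
  rw [Finset.sum_congr rfl (fun l _ => h1 l)]
  simp

lemma matConvMul_assoc (hu : ∀ a b : G, u (a * b) = u a + u b)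
    {X Y Z : Fin k → Fin k → (G → ℤ)}
    (hX : ∀ i j, NovikovCond u (X i j)) (hY : ∀ i j, NovikovCond u (Y i j))
    (hZ : ∀ i j, NovikovCond u (Z i j)) :
    matConvMul (matConvMul X Y) Z = matConvMul X (matConvMul Y Z) := by
  funext i j g
  rw [matConvMul_apply, matConvMul_apply]
  have lhs1 : ∀ m : Fin k, conv (matConvMul X Y i m) (Z m j) g
      = ∑ l : Fin k, conv (conv (X i l) (Y l m)) (Z m j) g := by
    intro m
    obtain ⟨d, hd⟩ := nc_bdd (hZ m j)
    have hrw : matConvMul X Y i m = fun x => ∑ l ∈ Finset.univ, conv (X i l) (Y l m) x := by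
      funext x; exact matConvMul_apply X Y i m x
    rw [hrw]
    exact conv_sum_left hu hd Finset.univ _ (fun l _ => nc_conv hu (hX i l) (hY l m)) g
  have rhs1 : ∀ l : Fin k, conv (X i l) (matConvMul Y Z l j) g
      = ∑ m : Fin k, conv (X i l) (conv (Y l m) (Z m j)) g := by
    intro l
    have hrw : matConvMul Y Z l j = fun x => ∑ m ∈ Finset.univ, conv (Y l m) (Z m j) x := by
      funext x; exact matConvMul_apply Y Z l j x
    rw [hrw]
    exact conv_sum_right hu (hX i l) Finset.univ _ (fun m _ => nc_conv hu (hY l m) (hZ m j)) g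
  rw [Finset.sum_congr rfl (fun m _ => lhs1 m), Finset.sum_congr rfl (fun l _ => rhs1 l),
    Finset.sum_comm]
  refine Finset.sum_congr rfl (fun l _ => Finset.sum_congr rfl (fun m _ => ?_))
  rw [conv_assoc hu (hX i l) (hY l m) (hZ m j)]

lemma matPow_succ' (hu : ∀ a b : G, u (a * b) = u a + u b)
    {A : Fin k → Fin k → (G → ℤ)} (hA : ∀ i j, NovikovCond u (A i j)) :
    ∀ m : ℕ, matConvMul (matConvPow A m) A = matConvPow A (m + 1) := by
  intro m
  induction m with
  | zero =>
    show matConvMul matDelta A = matConvMul A matDelta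
    rw [matConvMul_matDelta_left, matConvMul_matDelta_right]
  | succ m ih =>
    show matConvMul (matConvMul A (matConvPow A m)) A = _
    rw [matConvMul_assoc hu hA (nc_matConvPow hu hA m) hA, ih]
    rfl


end NovikovAux

/-- If `A` is a `k × k` matrix over the Novikov ring `Λ_u`, all of whose entries are
`u`-positive, then `Id - A` is invertible over `Λ_u`, with inverse `Id + Σ_{m ≥ 1} A^m`. -/
theorem novikov_id_sub_positive_matrix_invertible
    (u : G → ℝ) (hu : ∀ a b : G, u (a * b) = u a + u b) (hune : ∃ g : G, u g ≠ 0)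
    (A : Fin k → Fin k → (G → ℤ))
    (hA : ∀ i j : Fin k, NovikovCond u (A i j))
    (hpos : ∀ (i j : Fin k) (g : G), A i j g ≠ 0 → 0 < u g) :
    (∀ i j : Fin k, NovikovCond u
        (fun g => matDelta i j g + ∑ᶠ m : ℕ, matConvPow A (m + 1) i j g)) ∧
    matConvMul (matDelta - A)
        (fun i j g => matDelta i j g + ∑ᶠ m : ℕ, matConvPow A (m + 1) i j g) = matDelta ∧
    matConvMul (fun i j g => matDelta i j g + ∑ᶠ m : ℕ, matConvPow A (m + 1) i j g)
        (matDelta - A) = matDelta := by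
  classical
  obtain ⟨ε, hε0, hε⟩ := mat_eps hA hpos
  have hNCpow : ∀ (m : ℕ) (i j : Fin k), NovikovCond u (matConvPow A m i j) :=
    nc_matConvPow hu hA
  have hbd : ∀ (m : ℕ) (i j : Fin k) (g : G),
      matConvPow A m i j g ≠ 0 → (m : ℝ) * ε ≤ u g := pow_bdd hu hε
  have hpow0 : ∀ (i j : Fin k), matConvPow A 0 i j = matDelta i j := fun i j => rfl
  have hpowS : ∀ (m : ℕ), matConvPow A (m + 1) = matConvMul A (matConvPow A m) :=
    fun m => rfl
  -- truncation of the full series below a `u`-level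
  have htr : ∀ (N : ℕ) (l j : Fin k) (x : G), u x < ((N : ℝ) + 1) * ε →
      (matDelta l j x + ∑ᶠ m : ℕ, matConvPow A (m + 1) l j x)
        = ∑ m ∈ Finset.range (N + 1), matConvPow A m l j x := by
    intro N l j x hx
    have hsupp : (Function.support fun m : ℕ => matConvPow A (m + 1) l j x)
        ⊆ ↑(Finset.range N) := by
      intro m hm
      have h1 := hbd (m + 1) l j x hm
      push_cast at h1
      apply Finset.mem_coe.2 (Finset.mem_range.2 _)
      by_contra hc
      push_neg at hc
      have h2 : (N : ℝ) ≤ (m : ℝ) := Nat.cast_le.2 hc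
      nlinarith
    rw [finsum_eq_finset_sum_of_support_subset _ hsupp, Finset.sum_range_succ']
    have h0 : matConvPow A 0 l j x = matDelta l j x := by rw [hpow0]
    rw [h0]
    ring
  -- the NovikovCond part
  have hNCB : ∀ i j : Fin k, NovikovCond u
      (fun g => matDelta i j g + ∑ᶠ m : ℕ, matConvPow A (m + 1) i j g) := by
    intro i j
    have hT : NovikovCond u (fun g => ∑ᶠ m : ℕ, matConvPow A (m + 1) i j g) := by
      intro B
      set M : ℕ := Nat.floor (max B 0 / ε) + 1 with hM
      apply Set.Finite.subset (Set.Finite.biUnion (Finset.range M).finite_toSet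
        (fun m _ => hNCpow (m + 1) i j B))
      rintro g ⟨hg, hB⟩
      have hex : ∃ m : ℕ, matConvPow A (m + 1) i j g ≠ 0 := by
        by_contra hall
        push_neg at hall
        exact hg (finsum_eq_zero_of_forall_eq_zero hall)
      obtain ⟨m, hm⟩ := hex
      have h1 := hbd (m + 1) i j g hm
      push_cast at h1
      have hfl : max B 0 / ε < (M : ℝ) := by
        rw [hM]; push_cast; exact Nat.lt_floor_add_one _
      have h2 : max B 0 < (M : ℝ) * ε := (div_lt_iff₀ hε0).1 hfl
      have h3 : u g < max B 0 := lt_of_lt_of_le hB (le_max_left _ _)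
      have h4 : m < M := by
        have h5 : ((m : ℝ) + 1) * ε < (M : ℝ) * ε := by linarith
        have h6 : (m : ℝ) + 1 < (M : ℝ) := lt_of_mul_lt_mul_right h5 hε0.le
        have h7 : (m : ℝ) < (M : ℝ) := by linarith
        exact_mod_cast h7
      exact Set.mem_biUnion (Finset.mem_coe.2 (Finset.mem_range.2 h4)) ⟨hm, hB⟩
    exact nc_add (nc_matDelta i j) hT
  refine ⟨hNCB, ?_, ?_⟩
  -- left inverse
  · funext i j g
    set N : ℕ := Nat.floor (max (u g) 0 / ε) with hNdef
    have hN : ∀ x : G, u x ≤ u g → u x < ((N : ℝ) + 1) * ε := by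
      intro x hx
      have hfl : max (u g) 0 / ε < (N : ℝ) + 1 := by
        rw [hNdef]; push_cast; exact Nat.lt_floor_add_one _
      have h2 : max (u g) 0 < ((N : ℝ) + 1) * ε := (div_lt_iff₀ hε0).1 hfl
      exact lt_of_le_of_lt (le_trans hx (le_max_left _ _)) h2
    have hsub0 : ∀ (l j : Fin k) (x : G), ((matDelta - A : Fin k → Fin k → (G → ℤ))) l j x ≠ 0 → 0 ≤ u x := by
      intro l j x hx
      simp only [Pi.sub_apply] at hx
      by_cases h1 : A l j x = 0
      · have h2 : matDelta l j x ≠ 0 := by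
          intro h; apply hx; rw [h, h1, sub_zero]
        by_cases hlj : l = j
        · have hx1 : x = 1 := by
            by_contra hne
            exact h2 (by simp [matDelta, hlj, deltaOne, hne])
          rw [hx1, u_one hu]
        · exact absurd (by simp [matDelta, hlj]) h2
      · exact le_trans hε0.le (hε l j x h1)
    have hNCSN : ∀ l j : Fin k,
        NovikovCond u (fun x => ∑ m ∈ Finset.range (N + 1), matConvPow A m l j x) :=
      fun l j => nc_finsetSum _ _ (fun m _ => hNCpow m l j)
    have hvan : matConvPow A (N + 1) i j g = 0 := by
      by_contra hcon
      have h6 := hbd (N + 1) i j g hcon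
      have h7 := hN g le_rfl
      push_cast at h6
      linarith
    calc matConvMul ((matDelta - A : Fin k → Fin k → (G → ℤ)))
          (fun i j g => matDelta i j g + ∑ᶠ m : ℕ, matConvPow A (m + 1) i j g) i j g
        = ∑ l : Fin k, conv (((matDelta - A : Fin k → Fin k → (G → ℤ))) i l)
            (fun x => matDelta l j x + ∑ᶠ m : ℕ, matConvPow A (m + 1) l j x) g :=
          matConvMul_apply _ _ i j g
      _ = ∑ l : Fin k, conv (((matDelta - A : Fin k → Fin k → (G → ℤ))) i l)
            (fun x => ∑ m ∈ Finset.range (N + 1), matConvPow A m l j x) g := by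
          refine Finset.sum_congr rfl (fun l _ => ?_)
          exact conv_congr_right hu (hsub0 i l) (fun x hx => htr N l j x (hN x hx))
      _ = ∑ l : Fin k,
            (conv (matDelta i l) (fun x => ∑ m ∈ Finset.range (N + 1), matConvPow A m l j x) g
             - conv (A i l) (fun x => ∑ m ∈ Finset.range (N + 1), matConvPow A m l j x) g) := by
          refine Finset.sum_congr rfl (fun l _ => ?_)
          obtain ⟨d, hd⟩ := nc_bdd (hNCSN l j)
          have hrw : ((matDelta - A : Fin k → Fin k → (G → ℤ))) i l = fun x => matDelta i l x - A i l x := by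
            funext x; simp [Pi.sub_apply]
          rw [hrw]
          exact conv_sub_left hu (nc_matDelta i l) (hA i l) hd g
      _ = (∑ l : Fin k,
            conv (matDelta i l) (fun x => ∑ m ∈ Finset.range (N + 1), matConvPow A m l j x) g)
          - ∑ l : Fin k,
            conv (A i l) (fun x => ∑ m ∈ Finset.range (N + 1), matConvPow A m l j x) g :=
          Finset.sum_sub_distrib _ _
      _ = (∑ m ∈ Finset.range (N + 1), matConvPow A m i j g)
          - ∑ m ∈ Finset.range (N + 1), matConvPow A (m + 1) i j g := by
          congr 1
          · have h1 : ∀ l : Fin k,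
                conv (matDelta i l) (fun x => ∑ m ∈ Finset.range (N + 1), matConvPow A m l j x) g
                = if i = l then ∑ m ∈ Finset.range (N + 1), matConvPow A m l j g else 0 := by
              intro l
              by_cases h : i = l
              · simp [matDelta, h, conv_deltaOne_left]
              · simp [matDelta, h, conv_zero_left]
            rw [Finset.sum_congr rfl (fun l _ => h1 l)]
            simp
          · have h1 : ∀ l : Fin k,
                conv (A i l) (fun x => ∑ m ∈ Finset.range (N + 1), matConvPow A m l j x) g
                = ∑ m ∈ Finset.range (N + 1), conv (A i l) (matConvPow A m l j) g :=
              fun l => conv_sum_right hu (hA i l) _ _ (fun m _ => hNCpow m l j) g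
            rw [Finset.sum_congr rfl (fun l _ => h1 l), Finset.sum_comm]
            refine Finset.sum_congr rfl (fun m _ => ?_)
            rw [hpowS m, ← matConvMul_apply]
      _ = matConvPow A 0 i j g - matConvPow A (N + 1) i j g := by
          rw [← Finset.sum_sub_distrib, Finset.sum_range_sub']
      _ = matDelta i j g := by
          rw [hvan, hpow0, sub_zero]
  -- right inverse
  · funext i j g
    set N : ℕ := Nat.floor (max (u g) 0 / ε) with hNdef
    have hN : ∀ x : G, u x ≤ u g → u x < ((N : ℝ) + 1) * ε := by
      intro x hx
      have hfl : max (u g) 0 / ε < (N : ℝ) + 1 := by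
        rw [hNdef]; push_cast; exact Nat.lt_floor_add_one _
      have h2 : max (u g) 0 < ((N : ℝ) + 1) * ε := (div_lt_iff₀ hε0).1 hfl
      exact lt_of_le_of_lt (le_trans hx (le_max_left _ _)) h2
    have hsub0 : ∀ (l j : Fin k) (x : G), ((matDelta - A : Fin k → Fin k → (G → ℤ))) l j x ≠ 0 → 0 ≤ u x := by
      intro l j x hx
      simp only [Pi.sub_apply] at hx
      by_cases h1 : A l j x = 0
      · have h2 : matDelta l j x ≠ 0 := by
          intro h; apply hx; rw [h, h1, sub_zero]
        by_cases hlj : l = j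
        · have hx1 : x = 1 := by
            by_contra hne
            exact h2 (by simp [matDelta, hlj, deltaOne, hne])
          rw [hx1, u_one hu]
        · exact absurd (by simp [matDelta, hlj]) h2
      · exact le_trans hε0.le (hε l j x h1)
    have hNCSN : ∀ l j : Fin k,
        NovikovCond u (fun x => ∑ m ∈ Finset.range (N + 1), matConvPow A m l j x) :=
      fun l j => nc_finsetSum _ _ (fun m _ => hNCpow m l j)
    have hvan : matConvPow A (N + 1) i j g = 0 := by
      by_contra hcon
      have h6 := hbd (N + 1) i j g hcon
      have h7 := hN g le_rfl
      push_cast at h6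
      linarith
    calc matConvMul
          (fun i j g => matDelta i j g + ∑ᶠ m : ℕ, matConvPow A (m + 1) i j g)
          ((matDelta - A : Fin k → Fin k → (G → ℤ))) i j g
        = ∑ l : Fin k, conv
            (fun x => matDelta i l x + ∑ᶠ m : ℕ, matConvPow A (m + 1) i l x)
            (((matDelta - A : Fin k → Fin k → (G → ℤ))) l j) g :=
          matConvMul_apply _ _ i j g
      _ = ∑ l : Fin k, conv
            (fun x => ∑ m ∈ Finset.range (N + 1), matConvPow A m i l x)
            (((matDelta - A : Fin k → Fin k → (G → ℤ))) l j) g := by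
          refine Finset.sum_congr rfl (fun l _ => ?_)
          exact conv_congr_left hu (hsub0 l j) (fun x hx => htr N i l x (hN x hx))
      _ = ∑ l : Fin k,
            (conv (fun x => ∑ m ∈ Finset.range (N + 1), matConvPow A m i l x) (matDelta l j) g
             - conv (fun x => ∑ m ∈ Finset.range (N + 1), matConvPow A m i l x) (A l j) g) := by
          refine Finset.sum_congr rfl (fun l _ => ?_)
          obtain ⟨d1, hd1⟩ := nc_bdd (nc_matDelta (u := u) l j)
          obtain ⟨d2, hd2⟩ := nc_bdd (hA l j)
          have hrw : ((matDelta - A : Fin k → Fin k → (G → ℤ))) l j = fun x => matDelta l j x - A l j x := by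
            funext x; simp [Pi.sub_apply]
          rw [hrw]
          exact conv_sub_right hu (hNCSN i l) hd1 hd2 g
      _ = (∑ l : Fin k,
            conv (fun x => ∑ m ∈ Finset.range (N + 1), matConvPow A m i l x) (matDelta l j) g)
          - ∑ l : Fin k,
            conv (fun x => ∑ m ∈ Finset.range (N + 1), matConvPow A m i l x) (A l j) g :=
          Finset.sum_sub_distrib _ _
      _ = (∑ m ∈ Finset.range (N + 1), matConvPow A m i j g)
          - ∑ m ∈ Finset.range (N + 1), matConvPow A (m + 1) i j g := by
          congr 1
          · have h1 : ∀ l : Fin k,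
                conv (fun x => ∑ m ∈ Finset.range (N + 1), matConvPow A m i l x) (matDelta l j) g
                = if l = j then ∑ m ∈ Finset.range (N + 1), matConvPow A m i l g else 0 := by
              intro l
              by_cases h : l = j
              · simp [matDelta, h, conv_deltaOne_right]
              · simp [matDelta, h, conv_zero_right]
            rw [Finset.sum_congr rfl (fun l _ => h1 l)]
            simp
          · have h1 : ∀ l : Fin k,
                conv (fun x => ∑ m ∈ Finset.range (N + 1), matConvPow A m i l x) (A l j) g
                = ∑ m ∈ Finset.range (N + 1), conv (matConvPow A m i l) (A l j) g := by
              intro l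
              obtain ⟨d, hd⟩ := nc_bdd (hA l j)
              exact conv_sum_left hu hd _ _ (fun m _ => hNCpow m i l) g
            rw [Finset.sum_congr rfl (fun l _ => h1 l), Finset.sum_comm]
            refine Finset.sum_congr rfl (fun m _ => ?_)
            rw [← matPow_succ' hu hA m, ← matConvMul_apply]
      _ = matConvPow A 0 i j g - matConvPow A (N + 1) i j g := by
          rw [← Finset.sum_sub_distrib, Finset.sum_range_sub']
      _ = matDelta i j g := by
          rw [hvan, hpow0, sub_zero]
end
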